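/- Let A₀, A₁ be Hermitian d_A×d_A complex matrices with A₀² = A₁² = I, let B₀, B₁ be Hermitian d_B×d_B complex matrices with B₀² = B₁² = I, set A₊ = (A₀+A₁)/√2, A₋ = (A₀−A₁)/√2, and β̂ = A₀⊗B₀ + A₀⊗B₁ + A₁⊗B₀ − A₁⊗B₁. If ψ ∈ ℂ^{d_A} ⊗ ℂ^{d_B} is a unit vector with ⟨ψ, β̂ ψ⟩ = 2√2, then (A₊⊗I)ψ = (I⊗B₀)ψ, (A₋⊗I)ψ = (I⊗B₁)ψ, and ((A₀A₁ + A₁A₀)⊗I)ψ = 0. -/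
import Mathlib

open Matrix
open scoped Kronecker

lemma chsh_sub_kronecker {l m n p : Type*} (A B : Matrix l m ℂ) (C : Matrix n p ℂ) :
    (A - B) ⊗ₖ C = A ⊗ₖ C - B ⊗ₖ C := by
  ext ⟨i,j⟩ ⟨k,r⟩; simp [kroneckerMap_apply, sub_mul]

lemma chsh_conjT_kron {l n : Type*} (A : Matrix l l ℂ) (B : Matrix n n ℂ) :
    (A ⊗ₖ B)ᴴ = Aᴴ ⊗ₖ Bᴴ := by
  ext ⟨i,j⟩ ⟨k,r⟩; simp [kroneckerMap_apply, conjTranspose_apply, mul_comm]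

lemma chsh_dot_self_normSq {n : Type*} [Fintype n] (v : n → ℂ) :
    star v ⬝ᵥ v = ((∑ i, Complex.normSq (v i) : ℝ) : ℂ) := by
  simp [dotProduct, Complex.normSq_eq_conj_mul_self]

lemma chsh_dot_self_eq_zero {n : Type*} [Fintype n] (v : n → ℂ)
    (h : star v ⬝ᵥ v = 0) : v = 0 := by
  rw [chsh_dot_self_normSq] at h
  have h' : (∑ i, Complex.normSq (v i) : ℝ) = 0 := by exact_mod_cast h
  funext i
  have := (Finset.sum_eq_zero_iff_of_nonneg (fun i _ => Complex.normSq_nonneg (v i))).mp h' i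
    (Finset.mem_univ i)
  simpa [Complex.normSq_eq_zero] using this

/-- algebraic relations forced by a maximal CHSH violation
(first step of self-testing). -/
theorem chsh_maximal_violation_relations (dA dB : ℕ)
    (A₀ A₁ : Matrix (Fin dA) (Fin dA) ℂ)
    (B₀ B₁ : Matrix (Fin dB) (Fin dB) ℂ)
    (hA₀ : A₀.IsHermitian) (hA₁ : A₁.IsHermitian)
    (hA₀2 : A₀ * A₀ = 1) (hA₁2 : A₁ * A₁ = 1)
    (hB₀ : B₀.IsHermitian) (hB₁ : B₁.IsHermitian)
    (hB₀2 : B₀ * B₀ = 1) (hB₁2 : B₁ * B₁ = 1)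
    (ψ : Fin dA × Fin dB → ℂ)
    (hψ : star ψ ⬝ᵥ ψ = 1)
    (hβ : star ψ ⬝ᵥ ((A₀ ⊗ₖ B₀ + A₀ ⊗ₖ B₁ + A₁ ⊗ₖ B₀ - A₁ ⊗ₖ B₁).mulVec ψ)
        = ((2 * Real.sqrt 2 : ℝ) : ℂ)) :
    ((((Real.sqrt 2 : ℂ))⁻¹ • (A₀ + A₁)) ⊗ₖ (1 : Matrix (Fin dB) (Fin dB) ℂ)).mulVec ψ
        = (((1 : Matrix (Fin dA) (Fin dA) ℂ) ⊗ₖ B₀)).mulVec ψ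
    ∧ ((((Real.sqrt 2 : ℂ))⁻¹ • (A₀ - A₁)) ⊗ₖ (1 : Matrix (Fin dB) (Fin dB) ℂ)).mulVec ψ
        = (((1 : Matrix (Fin dA) (Fin dA) ℂ) ⊗ₖ B₁)).mulVec ψ
    ∧ (((A₀ * A₁ + A₁ * A₀) ⊗ₖ (1 : Matrix (Fin dB) (Fin dB) ℂ))).mulVec ψ = 0 := by
  set c : ℂ := ((Real.sqrt 2 : ℂ))⁻¹ with hc
  have hs2 : (Real.sqrt 2 : ℂ) * (Real.sqrt 2 : ℂ) = 2 := by
    norm_cast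
    exact Real.mul_self_sqrt (by norm_num)
  have hs0 : (Real.sqrt 2 : ℂ) ≠ 0 := by
    intro h
    rw [h, zero_mul] at hs2
    norm_num at hs2
  have hcc : c * c = 2⁻¹ := by
    rw [hc, ← mul_inv, hs2]
  have hcs : c * (Real.sqrt 2 : ℂ) = 1 := inv_mul_cancel₀ hs0
  have hstarc : star c = c := by
    rw [hc]
    simp [star_inv₀, Complex.star_def, Complex.conj_ofReal]
  set X : Matrix (Fin dA) (Fin dA) ℂ := c • (A₀ + A₁) with hX
  set Y : Matrix (Fin dA) (Fin dA) ℂ := c • (A₀ - A₁) with hY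
  set P : Matrix (Fin dA × Fin dB) (Fin dA × Fin dB) ℂ :=
    X ⊗ₖ (1 : Matrix (Fin dB) (Fin dB) ℂ) - (1 : Matrix (Fin dA) (Fin dA) ℂ) ⊗ₖ B₀ with hP
  set Q : Matrix (Fin dA × Fin dB) (Fin dA × Fin dB) ℂ :=
    Y ⊗ₖ (1 : Matrix (Fin dB) (Fin dB) ℂ) - (1 : Matrix (Fin dA) (Fin dA) ℂ) ⊗ₖ B₁ with hQ
  -- Hermitian-ness
  have hXH : Xᴴ = X := by
    rw [hX, conjTranspose_smul, conjTranspose_add, hA₀.eq, hA₁.eq, hstarc]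
  have hYH : Yᴴ = Y := by
    rw [hY, conjTranspose_smul, conjTranspose_sub, hA₀.eq, hA₁.eq, hstarc]
  have hPH : Pᴴ = P := by
    rw [hP, conjTranspose_sub, chsh_conjT_kron, chsh_conjT_kron, hXH, hB₀.eq]
    simp
  have hQH : Qᴴ = Q := by
    rw [hQ, conjTranspose_sub, chsh_conjT_kron, chsh_conjT_kron, hYH, hB₁.eq]
    simp
  -- squares
  have hXX : X * X = (2 : ℂ)⁻¹ • ((2 : ℂ) • 1 + (A₀ * A₁ + A₁ * A₀)) := by
    rw [hX, smul_mul_smul_comm, hcc]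
    congr 1
    rw [add_mul, mul_add, mul_add, hA₀2, hA₁2]
    module
  have hYY : Y * Y = (2 : ℂ)⁻¹ • ((2 : ℂ) • 1 - (A₀ * A₁ + A₁ * A₀)) := by
    rw [hY, smul_mul_smul_comm, hcc]
    congr 1
    rw [sub_mul, mul_sub, mul_sub, hA₀2, hA₁2]
    module
  have hPP : P * P = (X * X) ⊗ₖ (1 : Matrix (Fin dB) (Fin dB) ℂ)
      + (1 : Matrix (Fin dA) (Fin dA) ℂ) ⊗ₖ (B₀ * B₀) - (2 : ℂ) • (X ⊗ₖ B₀) := by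
    rw [hP, sub_mul, mul_sub, mul_sub, ← mul_kronecker_mul, ← mul_kronecker_mul,
      ← mul_kronecker_mul, ← mul_kronecker_mul, one_mul, mul_one, one_mul, mul_one,
      one_mul, mul_one, two_smul]
    abel
  have hQQ : Q * Q = (Y * Y) ⊗ₖ (1 : Matrix (Fin dB) (Fin dB) ℂ)
      + (1 : Matrix (Fin dA) (Fin dA) ℂ) ⊗ₖ (B₁ * B₁) - (2 : ℂ) • (Y ⊗ₖ B₁) := by
    rw [hQ, sub_mul, mul_sub, mul_sub, ← mul_kronecker_mul, ← mul_kronecker_mul,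
      ← mul_kronecker_mul, ← mul_kronecker_mul, one_mul, mul_one, one_mul, mul_one,
      one_mul, mul_one, two_smul]
    abel
  -- combine: P² + Q² = 4·1 − (2c)·β̂
  have hXB : X ⊗ₖ B₀ + Y ⊗ₖ B₁
      = c • (A₀ ⊗ₖ B₀ + A₀ ⊗ₖ B₁ + A₁ ⊗ₖ B₀ - A₁ ⊗ₖ B₁) := by
    rw [hX, hY, smul_kronecker, smul_kronecker, ← smul_add]
    congr 1
    rw [add_kronecker, chsh_sub_kronecker]
    abel
  have hS : P * P + Q * Q
      = (4 : ℂ) • (1 : Matrix (Fin dA × Fin dB) (Fin dA × Fin dB) ℂ)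
        - ((2 : ℂ) * c) • (A₀ ⊗ₖ B₀ + A₀ ⊗ₖ B₁ + A₁ ⊗ₖ B₀ - A₁ ⊗ₖ B₁) := by
    rw [hPP, hQQ, hXX, hYY, hB₀2, hB₁2, mul_smul, ← hXB, smul_add]
    simp only [smul_kronecker, add_kronecker, chsh_sub_kronecker, one_kronecker_one]
    module
  -- expectation of P²+Q² is zero
  have hval : star ψ ⬝ᵥ (P * P + Q * Q).mulVec ψ = 0 := by
    rw [hS, sub_mulVec, smul_mulVec, smul_mulVec, dotProduct_sub,
      dotProduct_smul, dotProduct_smul, one_mulVec, hψ, hβ]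
    push_cast
    rw [smul_eq_mul, smul_eq_mul, mul_one]
    rw [show (2 : ℂ) * c * (2 * (Real.sqrt 2 : ℂ)) = 2 * 2 * (c * (Real.sqrt 2 : ℂ)) by ring,
      hcs]
    norm_num
  have hnorm : ∀ M : Matrix (Fin dA × Fin dB) (Fin dA × Fin dB) ℂ, Mᴴ = M →
      star (M.mulVec ψ) ⬝ᵥ (M.mulVec ψ) = star ψ ⬝ᵥ (M * M).mulVec ψ := by
    intro M hM
    rw [star_mulVec, hM, dotProduct_mulVec, vecMul_vecMul, ← dotProduct_mulVec]
  have hsum : star (P.mulVec ψ) ⬝ᵥ (P.mulVec ψ) + star (Q.mulVec ψ) ⬝ᵥ (Q.mulVec ψ) = 0 := by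
    rw [hnorm P hPH, hnorm Q hQH, ← dotProduct_add, ← add_mulVec, hval]
  -- each term is zero
  rw [chsh_dot_self_normSq (P.mulVec ψ), chsh_dot_self_normSq (Q.mulVec ψ)] at hsum
  have hsum' : (∑ i, Complex.normSq (P.mulVec ψ i) : ℝ)
      + (∑ i, Complex.normSq (Q.mulVec ψ i) : ℝ) = 0 := by exact_mod_cast hsum
  have n1 : (0:ℝ) ≤ ∑ i, Complex.normSq (P.mulVec ψ i) :=
    Finset.sum_nonneg fun i _ => Complex.normSq_nonneg _
  have n2 : (0:ℝ) ≤ ∑ i, Complex.normSq (Q.mulVec ψ i) :=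
    Finset.sum_nonneg fun i _ => Complex.normSq_nonneg _
  have hPz : P.mulVec ψ = 0 := by
    apply chsh_dot_self_eq_zero
    rw [chsh_dot_self_normSq]
    have : (∑ i, Complex.normSq (P.mulVec ψ i) : ℝ) = 0 := by linarith
    rw [this, Complex.ofReal_zero]
  have hQz : Q.mulVec ψ = 0 := by
    apply chsh_dot_self_eq_zero
    rw [chsh_dot_self_normSq]
    have : (∑ i, Complex.normSq (Q.mulVec ψ i) : ℝ) = 0 := by linarith
    rw [this, Complex.ofReal_zero]
  have h1 : (X ⊗ₖ (1 : Matrix (Fin dB) (Fin dB) ℂ)).mulVec ψ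
      = ((1 : Matrix (Fin dA) (Fin dA) ℂ) ⊗ₖ B₀).mulVec ψ := by
    rw [hP, sub_mulVec] at hPz
    exact sub_eq_zero.mp hPz
  have h2 : (Y ⊗ₖ (1 : Matrix (Fin dB) (Fin dB) ℂ)).mulVec ψ
      = ((1 : Matrix (Fin dA) (Fin dA) ℂ) ⊗ₖ B₁).mulVec ψ := by
    rw [hQ, sub_mulVec] at hQz
    exact sub_eq_zero.mp hQz
  refine ⟨h1, h2, ?_⟩
  -- third relation
  have key : ∀ (M : Matrix (Fin dA) (Fin dA) ℂ) (B : Matrix (Fin dB) (Fin dB) ℂ),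
      B * B = 1 →
      (M ⊗ₖ (1 : Matrix (Fin dB) (Fin dB) ℂ)).mulVec ψ
        = ((1 : Matrix (Fin dA) (Fin dA) ℂ) ⊗ₖ B).mulVec ψ →
      ((M * M) ⊗ₖ (1 : Matrix (Fin dB) (Fin dB) ℂ)).mulVec ψ = ψ := by
    intro M B hB2 hMB
    have e1 : ((M * M) ⊗ₖ (1 : Matrix (Fin dB) (Fin dB) ℂ))
        = (M ⊗ₖ (1 : Matrix (Fin dB) (Fin dB) ℂ)) * (M ⊗ₖ (1 : Matrix (Fin dB) (Fin dB) ℂ)) := by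
      rw [← mul_kronecker_mul, one_mul]
    have e2 : (M ⊗ₖ (1 : Matrix (Fin dB) (Fin dB) ℂ)) * ((1 : Matrix (Fin dA) (Fin dA) ℂ) ⊗ₖ B)
        = ((1 : Matrix (Fin dA) (Fin dA) ℂ) ⊗ₖ B) * (M ⊗ₖ (1 : Matrix (Fin dB) (Fin dB) ℂ)) := by
      rw [← mul_kronecker_mul, ← mul_kronecker_mul, one_mul, mul_one, one_mul, mul_one]
    calc ((M * M) ⊗ₖ (1 : Matrix (Fin dB) (Fin dB) ℂ)).mulVec ψ
        = (M ⊗ₖ (1 : Matrix (Fin dB) (Fin dB) ℂ)).mulVec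
            ((M ⊗ₖ (1 : Matrix (Fin dB) (Fin dB) ℂ)).mulVec ψ) := by
          rw [e1, ← mulVec_mulVec]
      _ = (M ⊗ₖ (1 : Matrix (Fin dB) (Fin dB) ℂ)).mulVec
            (((1 : Matrix (Fin dA) (Fin dA) ℂ) ⊗ₖ B).mulVec ψ) := by rw [hMB]
      _ = ((1 : Matrix (Fin dA) (Fin dA) ℂ) ⊗ₖ B).mulVec
            ((M ⊗ₖ (1 : Matrix (Fin dB) (Fin dB) ℂ)).mulVec ψ) := by
          rw [mulVec_mulVec, mulVec_mulVec, e2]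
      _ = ((1 : Matrix (Fin dA) (Fin dA) ℂ) ⊗ₖ B).mulVec
            (((1 : Matrix (Fin dA) (Fin dA) ℂ) ⊗ₖ B).mulVec ψ) := by rw [hMB]
      _ = ψ := by
          rw [mulVec_mulVec, ← mul_kronecker_mul, one_mul, hB2, one_kronecker_one, one_mulVec]
  have kX := key X B₀ hB₀2 h1
  have kY := key Y B₁ hB₁2 h2
  have hT : A₀ * A₁ + A₁ * A₀ = X * X - Y * Y := by
    rw [hXX, hYY]
    module
  rw [hT, chsh_sub_kronecker, sub_mulVec, kX, kY, sub_self]
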